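/- arXiv:1405.4929 — 5 statements merged into one kernel-verified Lean document; each statement's English description precedes it below -/
import Mathlib

section
/- If X and Y are topological spaces such that ONE has a winning strategy in the compact-open game on X and ONE has a winning strategy in the compact-open game on Y, then ONE has a winning strategy in the compact-open game on the product space X × Y. -/
open Set

/-- `GDom R` is the set of dominating families of the relation `R`:
sets `Z ⊆ B` such that every `a ∈ A` is dominated by some `b ∈ Z`. -/
def GDom {α β : Type*} (R : α → β → Prop) : Set (Set β) :=
  {Z | ∀ a : α, ∃ b ∈ Z, R a b}

/-- A relation is total: every element of the domain is dominated by something. -/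
def IsTotalRel {α β : Type*} (R : α → β → Prop) : Prop :=
  ∀ a : α, ∃ b : β, R a b

/-- The product of two relations. -/
def GProd {α β α' β' : Type*} (R : α → β → Prop) (R' : α' → β' → Prop) :
    α × α' → β × β' → Prop :=
  fun a b => R a.1 b.1 ∧ R' a.2 b.2

/-- The finite history consisting of the first `n` moves of the sequence `b`. -/
def GHist {β : Type*} (b : ℕ → β) (n : ℕ) : List β :=
  List.ofFn fun i : Fin n => b i

/-- ONE has a winning strategy in the game `G(P,Q)`: in inning `n` ONE plays `aₙ ∈ A`,
TWO answers `bₙ` with `R aₙ bₙ`; ONE wins iff `{bₙ : n} ∈ GDom T`. -/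
def OneWinsG {α β γ : Type*} (R : α → β → Prop) (T : γ → β → Prop) : Prop :=
  ∃ σ : List β → α, ∀ b : ℕ → β,
    (∀ n, R (σ (GHist b n)) (b n)) → Set.range b ∈ GDom T

/-- TWO has a winning strategy in the game `G(P,Q)`. -/
def TwoWinsG {α β γ : Type*} (R : α → β → Prop) (T : γ → β → Prop) : Prop :=
  ∃ τ : List α → β, ∀ a : ℕ → α,
    (∀ n, R (a n) (τ (GHist a (n + 1)))) ∧
    Set.range (fun n => τ (GHist a (n + 1))) ∉ GDom T

/-- ONE has a winning strategy in the game `G₁(𝒜,ℬ)`: in inning `n` ONE plays `Aₙ ∈ 𝒜`,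
TWO answers `bₙ ∈ Aₙ`; TWO wins iff `{bₙ : n} ∈ ℬ`. -/
def OneWinsG1 {β : Type*} (𝒜 ℬ : Set (Set β)) : Prop :=
  ∃ σ : List β → Set β, (∀ h, σ h ∈ 𝒜) ∧
    ∀ b : ℕ → β, (∀ n, b n ∈ σ (GHist b n)) → Set.range b ∉ ℬ

/-- TWO has a winning strategy in the game `G₁(𝒜,ℬ)`. -/
def TwoWinsG1 {β : Type*} (𝒜 ℬ : Set (Set β)) : Prop :=
  ∃ τ : List (Set β) → β, ∀ S : ℕ → Set β, (∀ n, S n ∈ 𝒜) →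
    (∀ n, τ (GHist S (n + 1)) ∈ S n) ∧
    Set.range (fun n => τ (GHist S (n + 1))) ∈ ℬ

/-- TWO has a winning strategy in the game `G_fin(𝒜,ℬ)`: in inning `n` ONE plays `Aₙ ∈ 𝒜`,
TWO answers a finite `Fₙ ⊆ Aₙ`; TWO wins iff `⋃ₙ Fₙ ∈ ℬ`. -/
def TwoWinsGfin {β : Type*} (𝒜 ℬ : Set (Set β)) : Prop :=
  ∃ τ : List (Set β) → Set β, ∀ S : ℕ → Set β, (∀ n, S n ∈ 𝒜) →
    (∀ n, τ (GHist S (n + 1)) ⊆ S n ∧ (τ (GHist S (n + 1))).Finite) ∧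
    (⋃ n, τ (GHist S (n + 1))) ∈ ℬ

/-- `(𝒜,ℬ)`-Lindelöf: every member of `𝒜` has a countable subset belonging to `ℬ`. -/
def LindelofFam {β : Type*} (𝒜 ℬ : Set (Set β)) : Prop :=
  ∀ S ∈ 𝒜, ∃ C ⊆ S, C.Countable ∧ C ∈ ℬ

/-- The selection principle `S₁(𝒜,ℬ)`. -/
def SelS1 {β : Type*} (𝒜 ℬ : Set (Set β)) : Prop :=
  ∀ A : ℕ → Set β, (∀ n, A n ∈ 𝒜) →
    ∃ b : ℕ → β, (∀ n, b n ∈ A n) ∧ Set.range b ∈ ℬ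

/-- The selection principle `S_fin(𝒜,ℬ)`. -/
def SelSfin {β : Type*} (𝒜 ℬ : Set (Set β)) : Prop :=
  ∀ A : ℕ → Set β, (∀ n, A n ∈ 𝒜) →
    ∃ F : ℕ → Set β, (∀ n, F n ⊆ A n ∧ (F n).Finite) ∧ (⋃ n, F n) ∈ ℬ

/-- `𝒪_X`: the family of open covers of `X`. -/
def OpenCovers (X : Type*) [TopologicalSpace X] : Set (Set (Set X)) :=
  {𝒰 | (∀ U ∈ 𝒰, IsOpen U) ∧ ⋃₀ 𝒰 = Set.univ}

/-- ONE has a winning strategy in the point-open game on `X`. -/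
def OneWinsPointOpen (X : Type*) [TopologicalSpace X] : Prop :=
  ∃ σ : List (Set X) → X, ∀ U : ℕ → Set X,
    (∀ n, IsOpen (U n) ∧ σ (GHist U n) ∈ U n) → Set.range U ∈ OpenCovers X

/-- TWO has a winning strategy in the point-open game on `X`. -/
def TwoWinsPointOpen (X : Type*) [TopologicalSpace X] : Prop :=
  ∃ τ : List X → Set X, ∀ x : ℕ → X,
    (∀ n, IsOpen (τ (GHist x (n + 1))) ∧ x n ∈ τ (GHist x (n + 1))) ∧
    Set.range (fun n => τ (GHist x (n + 1))) ∉ OpenCovers X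

/-- `𝔇_X`: the family of dense subsets of `X`. -/
def DenseSets (X : Type*) [TopologicalSpace X] : Set (Set X) :=
  {D | Dense D}

/-- ONE has a winning strategy in the point-picking game `G^D_ω(X)` of Berner and Juhász. -/
def OneWinsPointPicking (X : Type*) [TopologicalSpace X] : Prop :=
  ∃ σ : List X → Set X, (∀ h, IsOpen (σ h) ∧ (σ h).Nonempty) ∧
    ∀ x : ℕ → X, (∀ n, x n ∈ σ (GHist x n)) → Dense (Set.range x)

/-- TWO has a winning strategy in the point-picking game `G^D_ω(X)`. -/
def TwoWinsPointPicking (X : Type*) [TopologicalSpace X] : Prop :=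
  ∃ τ : List (Set X) → X, ∀ U : ℕ → Set X,
    (∀ n, IsOpen (U n) ∧ (U n).Nonempty) →
    (∀ n, τ (GHist U (n + 1)) ∈ U n) ∧
    ¬ Dense (Set.range fun n => τ (GHist U (n + 1)))

/-- `𝒟_X`: families of open sets whose union is dense in `X`. -/
def DenseUnionFams (X : Type*) [TopologicalSpace X] : Set (Set (Set X)) :=
  {𝒰 | (∀ U ∈ 𝒰, IsOpen U) ∧ Dense (⋃₀ 𝒰)}

/-- ONE has a winning strategy in Tkachuk's game `θ(X)`. -/
def OneWinsTheta (X : Type*) [TopologicalSpace X] : Prop :=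
  ∃ σ : List (Set X) → X, ∀ U : ℕ → Set X,
    (∀ n, IsOpen (U n) ∧ σ (GHist U n) ∈ U n) → Dense (⋃ n, U n)

/-- TWO has a winning strategy in Tkachuk's game `θ(X)`. -/
def TwoWinsTheta (X : Type*) [TopologicalSpace X] : Prop :=
  ∃ τ : List X → Set X, ∀ x : ℕ → X,
    (∀ n, IsOpen (τ (GHist x (n + 1))) ∧ x n ∈ τ (GHist x (n + 1))) ∧
    ¬ Dense (⋃ n, τ (GHist x (n + 1)))

/-- `Ω_x`: the family of subsets of `X` having `x` in their closure. -/
def OmegaPt {X : Type*} [TopologicalSpace X] (x : X) : Set (Set X) :=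
  {A | x ∈ closure A}

/-- ONE has a winning strategy in Gruenhage's game `G^c_{O,P}(X,x)`. -/
def OneWinsGruenhage {X : Type*} [TopologicalSpace X] (x : X) : Prop :=
  ∃ σ : List X → Set X, (∀ h, IsOpen (σ h) ∧ x ∈ σ h) ∧
    ∀ y : ℕ → X, (∀ n, y n ∈ σ (GHist y n)) → x ∈ closure (Set.range y)

/-- TWO has a winning strategy in Gruenhage's game `G^c_{O,P}(X,x)`. -/
def TwoWinsGruenhage {X : Type*} [TopologicalSpace X] (x : X) : Prop :=
  ∃ τ : List (Set X) → X, ∀ V : ℕ → Set X,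
    (∀ n, IsOpen (V n) ∧ x ∈ V n) →
    (∀ n, τ (GHist V (n + 1)) ∈ V n) ∧
    x ∉ closure (Set.range fun n => τ (GHist V (n + 1)))

/-- ONE has a winning strategy in the compact-open game on `X`. -/
def OneWinsCompactOpen (X : Type*) [TopologicalSpace X] : Prop :=
  ∃ σ : List (Set X) → Set X, (∀ h, IsCompact (σ h)) ∧
    ∀ U : ℕ → Set X, (∀ n, IsOpen (U n) ∧ σ (GHist U n) ⊆ U n) →
      (⋃ n, U n) = Set.univ

/-- `⪯` is downwards `P`-compatible. -/
def DownwardsCompat {α β : Type*} (R : α → β → Prop) (le : β → β → Prop) : Prop :=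
  ∀ a b₁ b₂, R a b₁ → R a b₂ → ∃ b, R a b ∧ le b b₁ ∧ le b b₂

/-- `⪯` is upwards `Q`-compatible. -/
def UpwardsCompat {γ β : Type*} (T : γ → β → Prop) (le : β → β → Prop) : Prop :=
  ∀ c b₁ b₂, T c b₁ → le b₁ b₂ → T c b₂

/-- `⪯` is countably downwards `P`-compatible. -/
def CountablyDownwardsCompat {α β : Type*} (R : α → β → Prop) (le : β → β → Prop) : Prop :=
  ∀ a, ∀ E : Set β, E.Countable → E.Nonempty → (∀ b ∈ E, R a b) →
    ∃ b', R a b' ∧ ∀ b ∈ E, le b' b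

/-- A relation is `ℵ₀`-preserving if some partial order on `B` is both upwards
compatible and countably downwards compatible with it. -/
def Aleph0Preserving {α β : Type*} (R : α → β → Prop) : Prop :=
  ∃ le : β → β → Prop, IsPartialOrder β le ∧
    UpwardsCompat R le ∧ CountablyDownwardsCompat R le

/-- `Dom_γ(T)`: the γ-dominating sequences of the relation `T`. -/
def GDomGamma {γ β : Type*} (T : γ → β → Prop) : Set (ℕ → β) :=
  {z | ∀ c : γ, {n : ℕ | ¬ T c (z n)}.Finite}

/-- ONE has a winning strategy in the game `G_γ(P,Q)`. -/
def OneWinsGgamma {α β γ : Type*} (R : α → β → Prop) (T : γ → β → Prop) : Prop :=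
  ∃ σ : List β → α, ∀ b : ℕ → β,
    (∀ n, R (σ (GHist b n)) (b n)) → b ∈ GDomGamma T

/-- TWO has a winning strategy in the game `G_γ(P,Q)`. -/
def TwoWinsGgamma {α β γ : Type*} (R : α → β → Prop) (T : γ → β → Prop) : Prop :=
  ∃ τ : List α → β, ∀ a : ℕ → α,
    (∀ n, R (a n) (τ (GHist a (n + 1)))) ∧
    (fun n => τ (GHist a (n + 1))) ∉ GDomGamma T

/-- ONE has a winning strategy in the game `G₁(𝒜, Dom_γ(T))`. -/
def OneWinsG1gamma {β γ : Type*} (𝒜 : Set (Set β)) (T : γ → β → Prop) : Prop :=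
  ∃ σ : List β → Set β, (∀ h, σ h ∈ 𝒜) ∧
    ∀ b : ℕ → β, (∀ n, b n ∈ σ (GHist b n)) → b ∉ GDomGamma T

/-- TWO has a winning strategy in the game `G₁(𝒜, Dom_γ(T))`. -/
def TwoWinsG1gamma {β γ : Type*} (𝒜 : Set (Set β)) (T : γ → β → Prop) : Prop :=
  ∃ τ : List (Set β) → β, ∀ S : ℕ → Set β, (∀ n, S n ∈ 𝒜) →
    (∀ n, τ (GHist S (n + 1)) ∈ S n) ∧
    (fun n => τ (GHist S (n + 1))) ∈ GDomGamma T

/-- The `ℵ₀`-modification of a relation: moves become nonempty countable subsets of `B`,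
dominated pointwise. -/
def CountMod {α β : Type*} (R : α → β → Prop) :
    α → {E : Set β // E.Countable ∧ E.Nonempty} → Prop :=
  fun a E => ∀ b ∈ E.1, R a b

/-!
Restarting its strategy at every inning, ONE can make every point of `X` be covered infinitely
often. On `X × Y`, ONE then runs one such play on `X` together with, for every finite list `s` of
earlier innings, a play of its `Y`-strategy answered exactly at the innings in `s`. ONE's move is the
finite union of the products of the current `X`-move with all current `Y`-moves; from TWO's answer
`U` the tube lemma yields open boxes `u × v ⊆ U` around these products, and the `u`'s are
intersected. Given `(x, y)`, the innings `m₀ < m₁ < ⋯` at which `x` is covered on the `X` side form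
a `Y`-play, which covers `y` at some `mₖ`; so `(x, y) ∈ U_{mₖ}`.
-/

section GHist

variable {β : Type*}

@[simp]
lemma length_GHist (b : ℕ → β) (n : ℕ) : (GHist b n).length = n := by
  simp [GHist]

@[simp]
lemma getElem_GHist (b : ℕ → β) {n i : ℕ} (hi : i < (GHist b n).length) :
    (GHist b n)[i] = b i := by
  simp [GHist]

lemma take_GHist (b : ℕ → β) {k n : ℕ} (h : k ≤ n) : (GHist b n).take k = GHist b k := by
  apply List.ext_getElem <;> simp [h]

lemma GHist_add_left (b : ℕ → β) (N k : ℕ) :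
    GHist (fun i => b (N + i)) k = (GHist b (N + k)).drop N := by
  apply List.ext_getElem <;> simp

end GHist

theorem OneWinsCompactOpen.exists_strategy_infinitely_often {X : Type*} [TopologicalSpace X]
    (hX : OneWinsCompactOpen X) :
    ∃ σ : List (Set X) → Set X, (∀ h, IsCompact (σ h)) ∧
      ∀ U : ℕ → Set X, (∀ n, IsOpen (U n) ∧ σ (GHist U n) ⊆ U n) →
        ∀ x, {n | x ∈ U n}.Infinite := by
  obtain ⟨σ, hσc, hσ⟩ := hX
  -- ONE plays the union of the moves of the runs of `σ` started at the innings `j ≤ m`.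
  refine ⟨fun h => ⋃ j ∈ Finset.range (h.length + 1), σ (h.drop j),
    fun h => (Finset.range _).isCompact_biUnion fun j _ => hσc _, fun U hU x => ?_⟩
  refine Set.infinite_of_forall_exists_gt fun N => ?_
  have hrun : (⋃ k, U (N + 1 + k)) = univ := by
    refine hσ _ fun k => ⟨(hU _).1, ?_⟩
    rw [GHist_add_left]
    refine subset_trans ?_ (hU _).2
    exact subset_biUnion_of_mem (u := fun j => σ ((GHist U (N + 1 + k)).drop j)) (by simp)
  obtain ⟨k, hk⟩ := mem_iUnion.mp (hrun ▸ mem_univ x)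
  exact ⟨N + 1 + k, hk, by omega⟩

namespace CompactOpenProduct

variable {X Y : Type*} [TopologicalSpace X] [TopologicalSpace Y]

def branches (m : ℕ) : Set (List ℕ) := {s | s.length ≤ m ∧ ∀ i ∈ s, i < m}

lemma finite_branches (m : ℕ) : (branches m).Finite :=
  ((List.finite_length_le (Fin m) m).image (List.map Fin.val)).subset
    fun s ⟨hlen, hlt⟩ => ⟨s.pmap Fin.mk hlt, by simpa using hlen, by simp [List.map_pmap]⟩

open Classical in
noncomputable def tube (A : Set X) (B : Set Y) (W : Set (X × Y)) : Set X × Set Y :=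
  if h : ∃ p : Set X × Set Y, IsOpen p.1 ∧ IsOpen p.2 ∧ A ⊆ p.1 ∧ B ⊆ p.2 ∧ p.1 ×ˢ p.2 ⊆ W
  then h.choose else (univ, univ)

lemma tube_spec {A : Set X} {B : Set Y} {W : Set (X × Y)} (hA : IsCompact A) (hB : IsCompact B)
    (hW : IsOpen W) (hAB : A ×ˢ B ⊆ W) :
    IsOpen (tube A B W).1 ∧ IsOpen (tube A B W).2 ∧ A ⊆ (tube A B W).1 ∧ B ⊆ (tube A B W).2 ∧
      (tube A B W).1 ×ˢ (tube A B W).2 ⊆ W := by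
  obtain ⟨u, v, huv⟩ := generalized_tube_lemma hA hB hW hAB
  have hex : ∃ p : Set X × Set Y, IsOpen p.1 ∧ IsOpen p.2 ∧ A ⊆ p.1 ∧ B ⊆ p.2 ∧
      p.1 ×ˢ p.2 ⊆ W := ⟨(u, v), huv⟩
  rw [tube, dif_pos hex]
  exact hex.choose_spec

variable (σ : List (Set X) → Set X) (τ : List (Set Y) → Set Y)

/-- ONE's answers, in the `X`-play and in the `Y`-play along each branch `s`, derived from TWO's
answer `W` to ONE's move after the history `h`. The `Y`-play along `s` is the one answered at the
innings `s[0], s[1], …`; the `univ` case does not occur for `s ∈ branches h.length`. -/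
noncomputable def respond (h : List (Set (X × Y))) (W : Set (X × Y)) :
    Set X × (List ℕ → Set Y) :=
  let A := σ (List.ofFn fun i : Fin h.length => (respond (h.take i) h[i]).1)
  let B := fun s : List ℕ => τ (List.ofFn fun i : Fin s.length =>
    if hi : s[i] < h.length then (respond (h.take s[i]) h[s[i]]).2 (s.take i) else univ)
  (⋂ s ∈ branches h.length, (tube A (B s) W).1, fun s => (tube A (B s) W).2)
termination_by h.length
decreasing_by all_goals simp_all

def xHistory (h : List (Set (X × Y))) : List (Set X) :=
  List.ofFn fun i : Fin h.length => (respond σ τ (h.take i) h[i]).1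

def yHistory (h : List (Set (X × Y))) (s : List ℕ) : List (Set Y) :=
  List.ofFn fun i : Fin s.length =>
    if hi : s[i] < h.length then (respond σ τ (h.take s[i]) h[s[i]]).2 (s.take i) else univ

lemma respond_eq (h : List (Set (X × Y))) (W : Set (X × Y)) :
    respond σ τ h W =
      (⋂ s ∈ branches h.length, (tube (σ (xHistory σ τ h)) (τ (yHistory σ τ h s)) W).1,
        fun s => (tube (σ (xHistory σ τ h)) (τ (yHistory σ τ h s)) W).2) := by
  rw [respond]; rfl

def strategy (h : List (Set (X × Y))) : Set (X × Y) :=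
  ⋃ s ∈ branches h.length, σ (xHistory σ τ h) ×ˢ τ (yHistory σ τ h s)

variable {σ τ}

lemma isCompact_strategy (hσ : ∀ h, IsCompact (σ h)) (hτ : ∀ h, IsCompact (τ h))
    (h : List (Set (X × Y))) : IsCompact (strategy σ τ h) :=
  (finite_branches _).isCompact_biUnion fun _ _ => (hσ _).prod (hτ _)

variable (σ τ) in
noncomputable def response (U : ℕ → Set (X × Y)) (m : ℕ) : Set X × (List ℕ → Set Y) :=
  respond σ τ (GHist U m) (U m)

lemma xHistory_GHist (U : ℕ → Set (X × Y)) (m : ℕ) :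
    xHistory σ τ (GHist U m) = GHist (fun i => (response σ τ U i).1) m := by
  apply List.ext_getElem
  · simp [xHistory]
  · intro i hi _
    simp_all [xHistory, response, take_GHist]

lemma yHistory_GHist (U : ℕ → Set (X × Y)) {m : ℕ} {s : List ℕ} (hs : ∀ i ∈ s, i < m) :
    yHistory σ τ (GHist U m) s =
      List.ofFn fun i : Fin s.length => (response σ τ U s[i]).2 (s.take i) := by
  refine congrArg List.ofFn (funext fun i => ?_)
  have hi : s[(i : ℕ)] < m := hs _ (List.getElem_mem _)
  simp [hi, response, take_GHist _ hi.le]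

section LegalPlay

variable (hσc : ∀ h, IsCompact (σ h)) (hτc : ∀ h, IsCompact (τ h)) {U : ℕ → Set (X × Y)}
  (hU : ∀ n, IsOpen (U n) ∧ strategy σ τ (GHist U n) ⊆ U n)
include hσc hτc hU

lemma tube_spec_of_legal (m : ℕ) {s : List ℕ} (hs : s ∈ branches m) :
    let T := tube (σ (xHistory σ τ (GHist U m))) (τ (yHistory σ τ (GHist U m) s)) (U m)
    IsOpen T.1 ∧ IsOpen T.2 ∧ σ (xHistory σ τ (GHist U m)) ⊆ T.1 ∧
      τ (yHistory σ τ (GHist U m) s) ⊆ T.2 ∧ T.1 ×ˢ T.2 ⊆ U m := by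
  refine tube_spec (hσc _) (hτc _) (hU m).1 (subset_trans ?_ (hU m).2)
  rw [strategy, length_GHist]
  exact subset_biUnion_of_mem (u := fun s => σ _ ×ˢ τ (yHistory σ τ (GHist U m) s)) hs

lemma response_fst_legal (m : ℕ) :
    IsOpen (response σ τ U m).1 ∧
      σ (GHist (fun i => (response σ τ U i).1) m) ⊆ (response σ τ U m).1 := by
  rw [response, respond_eq, length_GHist, ← xHistory_GHist]
  exact ⟨(finite_branches m).isOpen_biInter fun s hs => (tube_spec_of_legal hσc hτc hU m hs).1,
    subset_iInter₂ fun s hs => (tube_spec_of_legal hσc hτc hU m hs).2.2.1⟩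

lemma response_snd_legal (m : ℕ) {s : List ℕ} (hs : s ∈ branches m) :
    IsOpen ((response σ τ U m).2 s) ∧
      τ (yHistory σ τ (GHist U m) s) ⊆ (response σ τ U m).2 s := by
  rw [response, respond_eq]
  exact ⟨(tube_spec_of_legal hσc hτc hU m hs).2.1, (tube_spec_of_legal hσc hτc hU m hs).2.2.2.1⟩

lemma response_prod_subset (m : ℕ) {s : List ℕ} (hs : s ∈ branches m) :
    (response σ τ U m).1 ×ˢ (response σ τ U m).2 s ⊆ U m := by
  rw [response, respond_eq, length_GHist]
  exact subset_trans (prod_mono (iInter₂_subset s hs) le_rfl)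
    (tube_spec_of_legal hσc hτc hU m hs).2.2.2.2

theorem strategy_wins
    (hσ : ∀ V : ℕ → Set X, (∀ n, IsOpen (V n) ∧ σ (GHist V n) ⊆ V n) →
      ∀ x, {n | x ∈ V n}.Infinite)
    (hτ : ∀ W : ℕ → Set Y, (∀ n, IsOpen (W n) ∧ τ (GHist W n) ⊆ W n) → (⋃ n, W n) = univ) :
    (⋃ n, U n) = univ := by
  refine eq_univ_of_forall fun ⟨x, y⟩ => ?_
  have hx := hσ _ (response_fst_legal hσc hτc hU) x
  set β := Nat.nth (· ∈ {n | x ∈ (response σ τ U n).1})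
  have hβ : StrictMono β := Nat.nth_strictMono hx
  have hL (k : ℕ) : GHist β k ∈ branches (β k) :=
    ⟨by simpa using hβ.id_le k, by simpa [GHist] using fun i : Fin k => hβ i.isLt⟩
  have hy : (⋃ k, (response σ τ U (β k)).2 (GHist β k)) = univ := by
    refine hτ _ fun k => ?_
    have hhist : GHist (fun k => (response σ τ U (β k)).2 (GHist β k)) k =
        yHistory σ τ (GHist U (β k)) (GHist β k) := by
      rw [yHistory_GHist U (hL k).2]
      apply List.ext_getElem
      · simp
      · intro i hi _
        simp_all [take_GHist]
    rw [hhist]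
    exact response_snd_legal hσc hτc hU _ (hL k)
  obtain ⟨k, hk⟩ := mem_iUnion.mp (hy ▸ mem_univ y)
  exact mem_iUnion.mpr ⟨β k,
    response_prod_subset hσc hτc hU _ (hL k) ⟨Nat.nth_mem_of_infinite hx k, hk⟩⟩

end LegalPlay

end CompactOpenProduct

/-- If ONE has a winning strategy in the compact-open game on `X` and
on `Y`, then ONE has a winning strategy in the compact-open game on `X × Y`. -/
theorem statement10 {X Y : Type*} [TopologicalSpace X] [TopologicalSpace Y]
    (hX : OneWinsCompactOpen X) (hY : OneWinsCompactOpen Y) :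
    OneWinsCompactOpen (X × Y) := by
  obtain ⟨σ, hσc, hσ⟩ := hX.exists_strategy_infinitely_often
  obtain ⟨τ, hτc, hτ⟩ := hY
  exact ⟨CompactOpenProduct.strategy σ τ, CompactOpenProduct.isCompact_strategy hσc hτc,
    fun U hU => CompactOpenProduct.strategy_wins hσc hτc hU hσ hτ⟩
end

section
/- Let X and Y be topological spaces such that TWO has a winning strategy in the Menger game G_fin(𝒪_X, 𝒪_X) on X and TWO has a winning strategy in the Menger game G_fin(𝒪_Y, 𝒪_Y) on Y. Then TWO has a winning strategy in the Menger game G_fin(𝒪_{X×Y}, 𝒪_{X×Y}) on the product space X × Y. -/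
open Set

/-!
Let `τX`, `τY` be winning strategies of TWO on `X` and `Y`. For an open cover `𝒲` of `X × Y`
and `y ∈ Y`, the open `u ⊆ X` with `u × v` inside a member of `𝒲` for some open `v ∋ y` cover
`X`; `τX` answers finitely many of them, and intersecting the matching `v` gives a neighbourhood
`V` of `y` with `⋃ (answer of τX) × V` covered by finitely many members of `𝒲`. These `V`
form an open cover of `Y`, which is played against `τY`.

TWO on `X × Y` thus runs a finite, growing tree of pairs `(h, g)` of simulated plays on `X`
and `Y`. A point `(x, y)` missed in an inning has either escaped `τY`, and `g` grows, or
escaped `τX` on the cover attached to `y`, and `h` grows while `g` restarts. As neither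
strategy can be escaped forever, this lexicographic descent ends and the point gets covered.
-/

theorem univ_mem_openCovers {Z : Type*} [TopologicalSpace Z] :
    ({univ} : Set (Set Z)) ∈ OpenCovers Z :=
  ⟨fun _ hU => mem_singleton_iff.1 hU ▸ isOpen_univ, sUnion_singleton univ⟩

theorem gHist_succ {β : Type*} (b : ℕ → β) (n : ℕ) :
    GHist b (n + 1) = GHist b n ++ [b n] := by
  rw [GHist, List.ofFn_succ_last]
  simp [GHist]

theorem gHist_getD_length {β : Type*} (L : List β) (d : β) :
    GHist (fun k => L.getD k d) L.length = L := by
  apply List.ext_getElem <;> simp [GHist]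

theorem forall_mem_gHist {β : Type*} {p : β → Prop} {b : ℕ → β} (hb : ∀ n, p (b n)) (n : ℕ) :
    ∀ a ∈ GHist b n, p a := by
  simp only [GHist, List.mem_ofFn, forall_exists_index]
  rintro a i rfl
  exact hb i

-- Redefine the strategy as `∅` off the legal histories.
theorem TwoWinsGfin.exists_strategy_subset_finite {β : Type*} {𝒜 ℬ : Set (Set β)} (h𝒜 : 𝒜.Nonempty)
    (h : TwoWinsGfin 𝒜 ℬ) :
    ∃ τ : List (Set β) → Set β, (∀ l A, τ (l ++ [A]) ⊆ A ∧ (τ (l ++ [A])).Finite) ∧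
      ∀ S : ℕ → Set β, (∀ n, S n ∈ 𝒜) → (⋃ n, τ (GHist S (n + 1))) ∈ ℬ := by
  classical
  obtain ⟨τ, hτ⟩ := h
  obtain ⟨A₀, hA₀⟩ := h𝒜
  refine ⟨fun l => if ∀ A ∈ l, A ∈ 𝒜 then τ l else ∅, fun l A => ?_, fun S hS => ?_⟩
  · dsimp only
    split_ifs with hl
    · set L := l ++ [A]
      have hS : ∀ n, L.getD n A₀ ∈ 𝒜 := fun n => by
        rcases lt_or_ge n L.length with hn | hn
        · exact List.getD_eq_getElem _ _ hn ▸ hl _ (List.getElem_mem hn)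
        · exact List.getD_eq_default _ _ hn ▸ hA₀
      have hmove := (hτ _ hS).1 l.length
      rwa [show l.length + 1 = L.length by simp [L], gHist_getD_length,
        List.getD_append_right _ _ _ _ le_rfl, Nat.sub_self] at hmove
    · exact ⟨empty_subset _, finite_empty⟩
  · convert (hτ S hS).2 using 3 with n
    exact if_pos (forall_mem_gHist hS _)

def EscapeStep {β : Type*} (𝒜 : Set (Set (Set β))) (τ : List (Set (Set β)) → Set (Set β))
    (z : β) (l' l : List (Set (Set β))) : Prop :=
  ∃ 𝒰 ∈ 𝒜, l' = l ++ [𝒰] ∧ z ∉ ⋃₀ τ l'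

theorem acc_escapeStep_nil {β : Type*} {𝒜 : Set (Set (Set β))}
    {τ : List (Set (Set β)) → Set (Set β)}
    (hτ : ∀ S : ℕ → Set (Set β), (∀ n, S n ∈ 𝒜) → ⋃₀ ⋃ n, τ (GHist S (n + 1)) = univ)
    (z : β) : Acc (EscapeStep 𝒜 τ z) [] := by
  by_contra hnil
  have hnext : ∀ l, ¬Acc (EscapeStep 𝒜 τ z) l →
      ∃ 𝒰, (𝒰 ∈ 𝒜 ∧ z ∉ ⋃₀ τ (l ++ [𝒰])) ∧ ¬Acc (EscapeStep 𝒜 τ z) (l ++ [𝒰]) := by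
    intro l hl
    by_contra! h
    exact hl ⟨l, fun l' ⟨𝒰, h𝒰, hl', hz⟩ => hl' ▸ h 𝒰 ⟨h𝒰, hl' ▸ hz⟩⟩
  choose! next hnext_mem hnext_acc using hnext
  let hist : ℕ → List (Set (Set β)) := fun n => Nat.rec [] (fun _ l => l ++ [next l]) n
  have hhist : ∀ n, ¬Acc (EscapeStep 𝒜 τ z) (hist n) := fun n => by
    induction n with
    | zero => exact hnil
    | succ n ih => exact hnext_acc _ ih
  have hS : ∀ n, GHist (fun k => next (hist k)) n = hist n := fun n => by
    induction n with
    | zero => rfl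
    | succ n ih => rw [gHist_succ, ih]
  have hcover := hτ (fun k => next (hist k)) fun n => (hnext_mem _ (hhist n)).1
  obtain ⟨W, hW, hzW⟩ := hcover ▸ mem_univ z
  obtain ⟨n, hWn⟩ := mem_iUnion.1 hW
  rw [hS] at hWn
  exact (hnext_mem _ (hhist n)).2 ⟨W, hWn, hzW⟩

def ResetLex {α β : Type*} (r : α → α → Prop) (s : β → β → Prop) (b₀ : β) :
    α × β → α × β → Prop :=
  fun p q => (r p.1 q.1 ∧ p.2 = b₀) ∨ (p.1 = q.1 ∧ s p.2 q.2)

theorem acc_resetLex {α β : Type*} {r : α → α → Prop} {s : β → β → Prop} {b₀ : β}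
    (hb₀ : Acc s b₀) {a : α} (ha : Acc r a) {b : β} (hb : Acc s b) :
    Acc (ResetLex r s b₀) (a, b) := by
  induction ha generalizing b with
  | intro a _ iha =>
    induction hb with
    | intro b _ ihb =>
      refine ⟨_, ?_⟩
      rintro ⟨a', b'⟩ (⟨hr, rfl⟩ | ⟨rfl, hs⟩)
      · exact iha a' hr hb₀
      · exact ihb b' hs

section TreeStrategy

variable {Z P : Type*} (root : P) (child : P → Set (Set Z) → Set P)
  (sel : P → Set (Set Z) → Set (Set Z))

def treePositions (l : List (Set (Set Z))) : Set P :=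
  l.foldl (fun T 𝒲 => ⋃ t ∈ T, child t 𝒲) {root}

def treeStrategy (l : List (Set (Set Z))) : Set (Set Z) :=
  ⋃ t ∈ treePositions root child l.dropLast, ⋃ 𝒲 ∈ l.getLast?, sel t 𝒲

theorem treePositions_append_singleton (l : List (Set (Set Z))) (𝒲 : Set (Set Z)) :
    treePositions root child (l ++ [𝒲]) = ⋃ t ∈ treePositions root child l, child t 𝒲 := by
  simp [treePositions]

theorem treeStrategy_append_singleton (l : List (Set (Set Z))) (𝒲 : Set (Set Z)) :
    treeStrategy root child sel (l ++ [𝒲]) = ⋃ t ∈ treePositions root child l, sel t 𝒲 := by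
  simp [treeStrategy]

end TreeStrategy

theorem twoWinsGfin_of_acc {Z P : Type*} [TopologicalSpace Z] (root : P)
    (r : Z → P → P → Prop) (hroot : ∀ z, Acc (r z) root)
    (hstep : ∀ t, ∀ 𝒲 ∈ OpenCovers Z, ∃ 𝓕 ⊆ 𝒲, 𝓕.Finite ∧
      ∃ C : Set P, C.Finite ∧ ∀ z ∉ ⋃₀ 𝓕, ∃ t' ∈ C, r z t' t) :
    TwoWinsGfin (OpenCovers Z) (OpenCovers Z) := by
  choose! sel hsel hsel_fin child hchild_fin hchild using hstep
  refine ⟨treeStrategy root child sel, fun S hS => ?_⟩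
  set pos := fun n => treePositions root child (GHist S n)
  have hpos_succ : ∀ n, pos (n + 1) = ⋃ t ∈ pos n, child t (S n) := fun n => by
    simp only [pos, gHist_succ, treePositions_append_singleton]
  have hmove : ∀ n, treeStrategy root child sel (GHist S (n + 1)) = ⋃ t ∈ pos n, sel t (S n) :=
    fun n => by simp only [pos, gHist_succ, treeStrategy_append_singleton]
  have hpos_fin : ∀ n, (pos n).Finite := fun n => by
    induction n with
    | zero => exact finite_singleton root
    | succ n ih => exact hpos_succ n ▸ ih.biUnion fun t _ => hchild_fin t _ (hS n)
  have hmove_sub : ∀ n, treeStrategy root child sel (GHist S (n + 1)) ⊆ S n := fun n =>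
    hmove n ▸ iUnion₂_subset fun t _ => hsel t _ (hS n)
  refine ⟨fun n => ⟨hmove_sub n, hmove n ▸ (hpos_fin n).biUnion fun t _ => hsel_fin t _ (hS n)⟩,
    fun U hU => ?_, eq_univ_of_forall fun z => ?_⟩
  · obtain ⟨n, hUn⟩ := mem_iUnion.1 hU
    exact (hS n).1 U (hmove_sub n hUn)
  · suffices h : ∀ t, Acc (r z) t → ∀ n, t ∈ pos n →
        z ∈ ⋃₀ ⋃ n, treeStrategy root child sel (GHist S (n + 1)) from
      h root (hroot z) 0 (mem_singleton root)
    intro t ht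
    induction ht with
    | intro t _ ih =>
      intro n htn
      by_cases hz : z ∈ ⋃₀ sel t (S n)
      · obtain ⟨W, hW, hzW⟩ := hz
        exact ⟨W, mem_iUnion.2 ⟨n, hmove n ▸ mem_biUnion htn hW⟩, hzW⟩
      · obtain ⟨t', ht', hr⟩ := hchild t _ (hS n) z hz
        exact ih t' hr (n + 1) (hpos_succ n ▸ mem_biUnion htn ht')

section Product

variable {X Y : Type*} [TopologicalSpace X] [TopologicalSpace Y]

def sliceCover (𝒲 : Set (Set (X × Y))) (y : Y) : Set (Set X) :=
  {u | IsOpen u ∧ ∃ v, IsOpen v ∧ y ∈ v ∧ ∃ W ∈ 𝒲, u ×ˢ v ⊆ W}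

theorem sliceCover_mem_openCovers {𝒲 : Set (Set (X × Y))} (h𝒲 : 𝒲 ∈ OpenCovers (X × Y))
    (y : Y) : sliceCover 𝒲 y ∈ OpenCovers X := by
  refine ⟨fun u hu => hu.1, eq_univ_of_forall fun x => ?_⟩
  obtain ⟨W, hW, hxy⟩ := h𝒲.2 ▸ mem_univ (x, y)
  obtain ⟨u, v, hu, hv, hxu, hyv, huv⟩ := isOpen_prod_iff.1 (h𝒲.1 W hW) x y hxy
  exact ⟨u, ⟨hu, v, hv, hyv, W, hW, huv⟩, hxu⟩

-- The tube lemma, with the finitely many sets of `F` in place of a compact set.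
theorem exists_nhds_prod_subset_sUnion {𝒲 : Set (Set (X × Y))} {y : Y} {F : Set (Set X)}
    (hF : F ⊆ sliceCover 𝒲 y) (hF_fin : F.Finite) :
    ∃ V, IsOpen V ∧ y ∈ V ∧ ∃ 𝓕 ⊆ 𝒲, 𝓕.Finite ∧ ⋃₀ F ×ˢ V ⊆ ⋃₀ 𝓕 := by
  have hrect : ∀ u ∈ F, ∃ v, IsOpen v ∧ y ∈ v ∧ ∃ W ∈ 𝒲, u ×ˢ v ⊆ W := fun u hu => (hF hu).2
  choose! v hv hyv W hW huvW using hrect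
  refine ⟨⋂ u ∈ F, v u, hF_fin.isOpen_biInter hv, mem_iInter₂.2 hyv, W '' F,
    image_subset_iff.2 hW, hF_fin.image W, ?_⟩
  rintro ⟨x, y'⟩ ⟨⟨u, hu, hxu⟩, hy'⟩
  exact ⟨W u, mem_image_of_mem W hu, huvW u hu ⟨hxu, mem_iInter₂.1 hy' u hu⟩⟩

theorem exists_openCovers_prod_subset_sUnion (φ : Set (Set X) → Set (Set X))
    (hφ : ∀ 𝒰 ∈ OpenCovers X, φ 𝒰 ⊆ 𝒰 ∧ (φ 𝒰).Finite) {𝒲 : Set (Set (X × Y))}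
    (h𝒲 : 𝒲 ∈ OpenCovers (X × Y)) :
    ∃ 𝒱 ∈ OpenCovers Y, ∀ V ∈ 𝒱, ∃ 𝒰 ∈ OpenCovers X, ∃ 𝓕 ⊆ 𝒲, 𝓕.Finite ∧
      ⋃₀ φ 𝒰 ×ˢ V ⊆ ⋃₀ 𝓕 := by
  refine ⟨{V | IsOpen V ∧ ∃ 𝒰 ∈ OpenCovers X, ∃ 𝓕 ⊆ 𝒲, 𝓕.Finite ∧ ⋃₀ φ 𝒰 ×ˢ V ⊆ ⋃₀ 𝓕},
    ⟨fun V hV => hV.1, eq_univ_of_forall fun y => ?_⟩, fun V hV => hV.2⟩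
  have h𝒰 := sliceCover_mem_openCovers h𝒲 y
  obtain ⟨V, hV, hyV, 𝓕, h𝓕, h𝓕_fin, hprod⟩ :=
    exists_nhds_prod_subset_sUnion (hφ _ h𝒰).1 (hφ _ h𝒰).2
  exact ⟨V, ⟨hV, _, h𝒰, 𝓕, h𝓕, h𝓕_fin, hprod⟩, hyV⟩

variable {τX : List (Set (Set X)) → Set (Set X)} {τY : List (Set (Set Y)) → Set (Set Y)}

theorem exists_inning_prod
    (hτX : ∀ l 𝒰, τX (l ++ [𝒰]) ⊆ 𝒰 ∧ (τX (l ++ [𝒰])).Finite)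
    (hτY : ∀ l 𝒱, τY (l ++ [𝒱]) ⊆ 𝒱 ∧ (τY (l ++ [𝒱])).Finite)
    (t : List (Set (Set X)) × List (Set (Set Y))) {𝒲 : Set (Set (X × Y))}
    (h𝒲 : 𝒲 ∈ OpenCovers (X × Y)) :
    ∃ 𝓕 ⊆ 𝒲, 𝓕.Finite ∧ ∃ C : Set (List (Set (Set X)) × List (Set (Set Y))), C.Finite ∧
      ∀ z ∉ ⋃₀ 𝓕, ∃ t' ∈ C,
        ResetLex (EscapeStep (OpenCovers X) τX z.1) (EscapeStep (OpenCovers Y) τY z.2) [] t' t := by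
  obtain ⟨h, g⟩ := t
  obtain ⟨𝒱, h𝒱, htube⟩ :=
    exists_openCovers_prod_subset_sUnion (fun 𝒰 => τX (h ++ [𝒰])) (fun 𝒰 _ => hτX h 𝒰) h𝒲
  set G := τY (g ++ [𝒱])
  choose! 𝒰 h𝒰 𝓕 h𝓕 h𝓕_fin hprod using fun V (hV : V ∈ G) => htube V ((hτY g 𝒱).1 hV)
  refine ⟨⋃ V ∈ G, 𝓕 V, iUnion₂_subset h𝓕, (hτY g 𝒱).2.biUnion h𝓕_fin,
    insert (h, g ++ [𝒱]) ((fun V => (h ++ [𝒰 V], [])) '' G),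
    ((hτY g 𝒱).2.image _).insert _, ?_⟩
  rintro ⟨x, y⟩ hxy
  by_cases hy : y ∈ ⋃₀ G
  · obtain ⟨V, hV, hyV⟩ := hy
    have hx : x ∉ ⋃₀ τX (h ++ [𝒰 V]) := fun hx => by
      obtain ⟨W, hW, hxyW⟩ := hprod V hV (mk_mem_prod hx hyV)
      exact hxy ⟨W, mem_biUnion hV hW, hxyW⟩
    exact ⟨_, mem_insert_of_mem _ (mem_image_of_mem _ hV), .inl ⟨⟨𝒰 V, h𝒰 V hV, rfl, hx⟩, rfl⟩⟩
  · exact ⟨_, mem_insert _ _, .inr ⟨rfl, 𝒱, h𝒱, rfl, hy⟩⟩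

end Product

/-- If TWO has a winning strategy in the Menger game on `X` and on `Y`,
then TWO has a winning strategy in the Menger game on `X × Y`. -/
theorem statement11 {X Y : Type*} [TopologicalSpace X] [TopologicalSpace Y]
    (hX : TwoWinsGfin (OpenCovers X) (OpenCovers X))
    (hY : TwoWinsGfin (OpenCovers Y) (OpenCovers Y)) :
    TwoWinsGfin (OpenCovers (X × Y)) (OpenCovers (X × Y)) := by
  obtain ⟨τX, hτX, hwinX⟩ := hX.exists_strategy_subset_finite ⟨_, univ_mem_openCovers⟩
  obtain ⟨τY, hτY, hwinY⟩ := hY.exists_strategy_subset_finite ⟨_, univ_mem_openCovers⟩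
  have haccX := acc_escapeStep_nil fun S hS => (hwinX S hS).2
  have haccY := acc_escapeStep_nil fun S hS => (hwinY S hS).2
  exact twoWinsGfin_of_acc ([], [])
    (fun z => ResetLex (EscapeStep _ τX z.1) (EscapeStep _ τY z.2) [])
    (fun z => acc_resetLex (haccY z.2) (haccX z.1) (haccY z.2))
    (fun t _ h𝒲 => exists_inning_prod hτX hτY t h𝒲)
end

section
/- Let P = (A,B,R), P' = (A',B',R'), Q = (C,B,T) and Q' = (C',B',T') be relations, and suppose there is a partial order ⪯ on B that is both downwards P-compatible and upwards Q-compatible. If TWO has a winning strategy in the game G_fin(Dom(P'), Dom(Q')) and S_fin(Dom(P), Dom(Q)) holds, then S_fin(Dom(P⊗P'), Dom(Q⊗Q')) holds. -/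
open Set

/-! Fix `Dₙ ∈ Dom(P⊗P')` and a winning strategy `τ` of TWO. For `a ∈ A` the slice
`Dₘ[a] = {b' | ∃ b, a R b ∧ (b, b') ∈ Dₘ}` is a legal move of ONE in `G_fin(Dom P', Dom Q')`.
Each point of `τ`'s finite answer to a history ending in `Dₘ[a]` lifts to a pair in `Dₘ`, and
downward compatibility gives one `bₘ(a)` with `a R bₘ(a)` below all first coordinates. At every
node of the game tree, `S_fin(Dom P, Dom Q)` applied to the dominating families `{bₘ(a) : a ∈ A}`
selects finitely many `a`; closing off under these selections countably often yields a countable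
subtree. As `τ` wins every play in it, for each `c'` some node has all its answers meeting
`T'(c')` (otherwise ONE strings the bad moves into a play lost by TWO). There the selection for `c`
yields `a` with `c T bₘ(a)`, and upward compatibility passes `c T ·` to the lifted pair. -/

theorem GHist_succ {X : Type*} (S : ℕ → X) (n : ℕ) : GHist S (n + 1) = GHist S n ++ [S n] := by
  rw [GHist, List.ofFn_succ', List.concat_eq_append]
  rfl

theorem GHist_comp {X Y : Type*} (f : X → Y) (S : ℕ → X) (n : ℕ) :
    GHist (f ∘ S) n = (GHist S n).map f := by
  simp only [GHist, List.map_ofFn]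
  rfl

theorem GHist_getD {X : Type*} (l : List X) (d : X) : GHist (l.getD · d) l.length = l := by
  apply List.ext_getElem <;> simp [GHist]

theorem exists_history_forall_response_dominates {X Y Z : Type*} {τ : List X → Set Y}
    {M : Set X} {T' : Z → Y → Prop}
    (hτ : ∀ S : ℕ → X, (∀ n, S n ∈ M) → (⋃ n, τ (GHist S (n + 1))) ∈ GDom T') (z : Z) :
    ∃ l : List X, (∀ x ∈ l, x ∈ M) ∧ ∀ x ∈ M, ∃ y ∈ τ (l ++ [x]), T' z y := by
  by_contra! hbad
  obtain ⟨x₀, hx₀, -⟩ := hbad [] (by simp)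
  have hmiss : ∀ l : List X, ∃ x ∈ M, (∀ x ∈ l, x ∈ M) → ∀ y ∈ τ (l ++ [x]), ¬ T' z y := by
    intro l
    by_cases hl : ∀ x ∈ l, x ∈ M
    · obtain ⟨x, hx, hx_miss⟩ := hbad l hl
      exact ⟨x, hx, fun _ => hx_miss⟩
    · exact ⟨x₀, hx₀, fun hl' => (hl hl').elim⟩
  choose next hnextM hnext using hmiss
  let hist : ℕ → List X := fun n => Nat.rec [] (fun _ l => l ++ [next l]) n
  have hhist : ∀ n, GHist (fun n => next (hist n)) n = hist n := by
    intro n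
    induction n with
    | zero => rfl
    | succ n ih => rw [GHist_succ, ih]
  have hlegal : ∀ n, ∀ x ∈ hist n, x ∈ M := by
    intro n
    induction n with
    | zero => simp [hist]
    | succ n ih => simpa [hist, or_imp, forall_and] using ⟨ih, hnextM _⟩
  obtain ⟨y, hy, hzy⟩ := hτ (fun n => next (hist n)) (fun n => hnextM _) z
  obtain ⟨n, hn⟩ := mem_iUnion.mp hy
  rw [hhist] at hn
  exact hnext (hist n) (hlegal n) y hn hzy

theorem strategy_response_subset_finite {X : Type*} {𝒜 ℬ : Set (Set X)}
    {τ : List (Set X) → Set X}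
    (hτ : ∀ S : ℕ → Set X, (∀ n, S n ∈ 𝒜) →
      (∀ n, τ (GHist S (n + 1)) ⊆ S n ∧ (τ (GHist S (n + 1))).Finite) ∧
      (⋃ n, τ (GHist S (n + 1))) ∈ ℬ)
    {l : List (Set X)} (hl : ∀ U ∈ l, U ∈ 𝒜) {U : Set X} (hU : U ∈ 𝒜) :
    τ (l ++ [U]) ⊆ U ∧ (τ (l ++ [U])).Finite := by
  -- `hτ` only speaks about full plays: extend the history by repeating `U` forever.
  have hS : ∀ n, (l ++ [U]).getD n U ∈ 𝒜 := by
    intro n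
    by_cases hn : n < (l ++ [U]).length
    · rw [List.getD_eq_getElem _ _ hn]
      rcases List.mem_append.mp (List.getElem_mem hn) with hmem | hmem
      · exact hl _ hmem
      · rwa [List.mem_singleton.mp hmem]
    · rwa [List.getD_eq_default _ _ (not_lt.mp hn)]
  have := (hτ _ hS).1 l.length
  have hlen : l.length + 1 = (l ++ [U]).length := by simp
  rw [hlen, GHist_getD, List.getD_append_right _ _ _ _ le_rfl] at this
  simpa using this

theorem strategy_map_moves {X Y Z : Type*} {𝒜 : Set (Set Y)} {T' : Z → Y → Prop}
    {τ : List (Set Y) → Set Y}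
    (hτ : ∀ S : ℕ → Set Y, (∀ n, S n ∈ 𝒜) →
      (∀ n, τ (GHist S (n + 1)) ⊆ S n ∧ (τ (GHist S (n + 1))).Finite) ∧
      (⋃ n, τ (GHist S (n + 1))) ∈ GDom T')
    {move : X → Set Y} (hmove : ∀ x, move x ∈ 𝒜) :
    (∀ l x, τ ((l ++ [x]).map move) ⊆ move x ∧ (τ ((l ++ [x]).map move)).Finite) ∧
      ∀ S : ℕ → X, (⋃ n, τ ((GHist S (n + 1)).map move)) ∈ GDom T' := by
  refine ⟨fun l x => ?_, fun S => ?_⟩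
  · rw [List.map_append, List.map_singleton]
    refine strategy_response_subset_finite hτ (fun U hU => ?_) (hmove x)
    obtain ⟨y, -, rfl⟩ := List.mem_map.mp hU
    exact hmove y
  · simpa only [GHist_comp] using (hτ (move ∘ S) fun n => hmove _).2

def slice {α β β' : Type*} (R : α → β → Prop) (D : Set (β × β')) (a : α) : Set β' :=
  {b' | ∃ b, R a b ∧ (b, b') ∈ D}

theorem slice_mem_GDom {α β α' β' : Type*} {R : α → β → Prop} {R' : α' → β' → Prop}
    {D : Set (β × β')} (hD : D ∈ GDom (GProd R R')) (a : α) : slice R D a ∈ GDom R' := by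
  intro a'
  obtain ⟨⟨b, b'⟩, hbD, hab, hab'⟩ := hD (a, a')
  exact ⟨b', ⟨b, hab, hbD⟩, hab'⟩

theorem exists_lowerBound_lift_of_subset_slice {α β β' : Type*} {R : α → β → Prop}
    {le : β → β → Prop} [IsTrans β le] (hR : IsTotalRel R)
    (hdown : DownwardsCompat R le) {D : Set (β × β')} {a : α} {F' : Set β'}
    (hF' : F'.Finite) (hsub : F' ⊆ slice R D a) :
    ∃ b₀, R a b₀ ∧ ∃ F ⊆ D, F.Finite ∧ ∀ b' ∈ F', ∃ b, (b, b') ∈ F ∧ le b₀ b := by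
  induction F', hF' using Set.Finite.induction_on with
  | empty =>
    obtain ⟨b₀, hb₀⟩ := hR a
    exact ⟨b₀, hb₀, ∅, empty_subset _, finite_empty, by simp⟩
  | @insert b' F' _ _ ih =>
    obtain ⟨b₀, hb₀, F, hFD, hF, hlift⟩ := ih ((subset_insert _ _).trans hsub)
    obtain ⟨b, hab, hbD⟩ := hsub (mem_insert _ _)
    obtain ⟨b₁, hb₁, hb₁₀, hb₁b⟩ := hdown a b₀ b hb₀ hab
    refine ⟨b₁, hb₁, insert (b, b') F, insert_subset hbD hFD, hF.insert _, ?_⟩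
    rintro x (rfl | hx)
    · exact ⟨b, mem_insert _ _, hb₁b⟩
    · obtain ⟨c, hcF, hc⟩ := hlift x hx
      exact ⟨c, mem_insert_of_mem _ hcF, _root_.trans hb₁₀ hc⟩

theorem SelSfin.exists_finite_indices {α β γ : Type*} {R : α → β → Prop} {T : γ → β → Prop}
    (hS : SelSfin (GDom R) (GDom T)) (b : ℕ → α → β) (hb : ∀ n a, R a (b n a)) :
    ∃ A : ℕ → Set α, (∀ n, (A n).Finite) ∧ ∀ c, ∃ n, ∃ a ∈ A n, T c (b n a) := by
  obtain ⟨F, hF, hcov⟩ := hS (fun n => range (b n)) fun n a => ⟨b n a, mem_range_self a, hb n a⟩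
  have : ∀ n, ∃ A ⊆ univ, A.Finite ∧ F n = b n '' A := fun n =>
    exists_subset_image_finite_and.mp ⟨F n, by rw [image_univ]; exact (hF n).1, (hF n).2, rfl⟩
  choose A _ hA hAF using this
  refine ⟨A, hA, fun c => ?_⟩
  obtain ⟨y, hy, hcy⟩ := hcov c
  obtain ⟨n, hn⟩ := mem_iUnion.mp hy
  rw [hAF] at hn
  obtain ⟨a, ha, rfl⟩ := hn
  exact ⟨n, a, ha, hcy⟩

theorem Set.Countable.setOf_forall_mem_list {κ : Type*} {s : Set κ} (hs : s.Countable) :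
    {l : List κ | ∀ x ∈ l, x ∈ s}.Countable := by
  have := hs.to_subtype
  refine (countable_range (List.map ((↑) : s → κ))).mono fun l hl => ?_
  lift l to List s using hl
  exact mem_range_self l

theorem exists_closed_set_with_enumerated_lists {κ : Type*} (g : ℕ → List κ → Set κ)
    (hg : ∀ k l, (g k l).Countable) :
    ∃ (node : ℕ → List κ) (C : Set κ), (∀ k, g k (node k) ⊆ C) ∧
      ∀ l : List κ, (∀ x ∈ l, x ∈ C) → ∃ k, node k = l := by
  have : ∀ s : Set κ, ∃ e : ℕ → List κ, s.Countable → range e = {l | ∀ x ∈ l, x ∈ s} := by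
    intro s
    by_cases hs : s.Countable
    · obtain ⟨e, he⟩ := hs.setOf_forall_mem_list.exists_eq_range ⟨[], by simp⟩
      exact ⟨e, fun _ => he.symm⟩
    · exact ⟨fun _ => [], fun h => (hs h).elim⟩
  choose enum henum using this
  let C : ℕ → Set κ := fun r => Nat.rec ∅ (fun r s => s ∪ ⋃ j, g (Nat.pair r j) (enum s j)) r
  have hC_succ : ∀ r, C (r + 1) = C r ∪ ⋃ j, g (Nat.pair r j) (enum (C r) j) := fun _ => rfl
  have hC_countable : ∀ r, (C r).Countable := by
    intro r
    induction r with
    | zero => exact countable_empty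
    | succ r ih => rw [hC_succ]; exact ih.union (countable_iUnion fun j => hg _ _)
  have hC_mono : Monotone C := monotone_nat_of_le_succ fun r => by
    rw [hC_succ]; exact subset_union_left
  refine ⟨fun k => enum (C k.unpair.1) k.unpair.2, ⋃ r, C r, fun k => ?_, fun l hl => ?_⟩
  · refine subset_trans ?_ (subset_iUnion C (k.unpair.1 + 1))
    rw [hC_succ]
    refine subset_union_of_subset_right (subset_iUnion_of_subset k.unpair.2 ?_) _
    rw [Nat.pair_unpair]
  · classical
    obtain ⟨r, hr⟩ := hC_mono.directed_le.exists_mem_subset_of_finset_subset_biUnion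
      (s := l.toFinset) fun x hx => hl x (by simpa using hx)
    obtain ⟨j, rfl⟩ : l ∈ range (enum (C r)) := by
      rw [henum _ (hC_countable r)]
      exact fun x hx => hr (by simpa using hx)
    exact ⟨Nat.pair r j, by simp⟩

theorem statement13_general {α β γ α' β' γ' : Type*}
    (R : α → β → Prop) (T : γ → β → Prop)
    (R' : α' → β' → Prop) (T' : γ' → β' → Prop)
    (hR : IsTotalRel R)
    (le : β → β → Prop) (hpo : IsPartialOrder β le)
    (hdown : DownwardsCompat R le) (hup : UpwardsCompat T le)
    (hwin : TwoWinsGfin (GDom R') (GDom T'))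
    (hSfin : SelSfin (GDom R) (GDom T)) :
    SelSfin (GDom (GProd R R')) (GDom (GProd T T')) := by
  obtain ⟨τ, hτ⟩ := hwin
  intro D hD
  obtain ⟨hresp, hplay⟩ := strategy_map_moves hτ fun x : ℕ × α => slice_mem_GDom (hD x.1) x.2
  choose low hlow lift hliftD hliftfin hlift using fun l m a =>
    exists_lowerBound_lift_of_subset_slice hR hdown (hresp l (m, a)).2 (hresp l (m, a)).1
  -- Node `k` of the game tree is served by the indices `Nat.pair k i`, so each `D m` is used
  -- at one node only.
  choose sel hselfin hsel using fun l k =>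
    hSfin.exists_finite_indices (fun i => low l (Nat.pair k i)) fun i => hlow l _
  obtain ⟨node, C, hC, hnode⟩ := exists_closed_set_with_enumerated_lists
    (fun k l => univ ×ˢ ⋃ i, sel l k i)
    (fun k l => countable_univ.prod (countable_iUnion fun i => (hselfin l k i).countable))
  refine ⟨fun m => ⋃ a ∈ sel (node m.unpair.1) m.unpair.1 m.unpair.2, lift (node m.unpair.1) m a,
    fun m => ⟨iUnion₂_subset fun a _ => hliftD _ _ _,
      (hselfin _ _ _).biUnion fun a _ => hliftfin _ _ _⟩, ?_⟩
  rintro ⟨c, c'⟩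
  obtain ⟨l, hlC, hl⟩ := exists_history_forall_response_dominates
    (τ := fun l => τ (l.map _)) (M := C) (fun S _ => hplay S) c'
  obtain ⟨k, rfl⟩ := hnode l hlC
  obtain ⟨i, a, ha, hca⟩ := hsel (node k) k c
  obtain ⟨b', hb', hc'b'⟩ := hl (Nat.pair k i, a) (hC k ⟨mem_univ _, mem_iUnion.mpr ⟨i, ha⟩⟩)
  obtain ⟨b, hbF, hle⟩ := hlift _ _ _ b' hb'
  exact ⟨(b, b'), mem_iUnion.mpr ⟨Nat.pair k i, by simpa using ⟨a, ha, hbF⟩⟩, hup c _ _ hca hle, hc'b'⟩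

/-- With a partial order on `B` downwards `P`-compatible and upwards
`Q`-compatible, if TWO has a winning strategy in `G_fin(Dom(P'), Dom(Q'))` and
`S_fin(Dom(P), Dom(Q))` holds, then `S_fin(Dom(P⊗P'), Dom(Q⊗Q'))` holds. -/
theorem statement13 {α β γ α' β' γ' : Type*}
    [Nonempty α] [Nonempty γ] [Nonempty α'] [Nonempty γ']
    (R : α → β → Prop) (T : γ → β → Prop)
    (R' : α' → β' → Prop) (T' : γ' → β' → Prop)
    (hR : IsTotalRel R) (hT : IsTotalRel T)
    (hR' : IsTotalRel R') (hT' : IsTotalRel T')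
    (le : β → β → Prop) (hpo : IsPartialOrder β le)
    (hdown : DownwardsCompat R le) (hup : UpwardsCompat T le)
    (hwin : TwoWinsGfin (GDom R') (GDom T'))
    (hSfin : SelSfin (GDom R) (GDom T)) :
    SelSfin (GDom (GProd R R')) (GDom (GProd T T')) :=
  statement13_general R T R' T' hR le hpo hdown hup hwin hSfin
end

section
/- Let P = (A,B,R), P' = (A',B',R'), Q = (C,B,T) and Q' = (C',B',T') be relations, and suppose there is a partial order ⪯ on B that is both downwards P-compatible and upwards Q-compatible. If TWO has a winning strategy in the game G_fin(Dom(P'), Dom(Q')) and TWO has a winning strategy in the game G_fin(Dom(P), Dom(Q)), then TWO has a winning strategy in the game G_fin(Dom(P⊗P'), Dom(Q⊗Q')). -/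
open Set

/- ========= auxiliary development for statement14 ========= -/
set_option linter.unusedSectionVars false

namespace S14

theorem ghist_succ {β : Type*} (b : ℕ → β) (n : ℕ) :
    GHist b (n + 1) = GHist b n ++ [b n] := by
  unfold GHist
  rw [List.ofFn_succ']
  simp [List.concat_eq_append]

theorem ghist_zero {β : Type*} (b : ℕ → β) : GHist b 0 = [] := by
  simp [GHist]

noncomputable def padSeq {β : Type*} (p : List β) (M d : β) : ℕ → β := fun i =>
  if h : i < p.length then p[i] else if i = p.length then M else d

theorem ghist_padSeq {β : Type*} (p : List β) (M d : β) :
    GHist (padSeq p M d) (p.length + 1) = p ++ [M] := by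
  apply List.ext_getElem
  · simp [GHist]
  · intro i h1 h2
    simp only [GHist, List.getElem_ofFn, padSeq]
    rcases lt_or_ge i p.length with h | h
    · rw [dif_pos h, List.getElem_append_left h]
    · have hi : i = p.length := by simp [GHist] at h1; omega
      subst hi
      rw [dif_neg (by omega), if_pos rfl]
      simp

theorem pad {β : Type*} {𝒜 : Set (Set β)} (τ : List (Set β) → Set β)
    (huniv : Set.univ ∈ 𝒜)
    (hτ : ∀ S : ℕ → Set β, (∀ n, S n ∈ 𝒜) →
      (∀ n, τ (GHist S (n + 1)) ⊆ S n ∧ (τ (GHist S (n + 1))).Finite))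
    (p : List (Set β)) (hp : ∀ X ∈ p, X ∈ 𝒜) (M : Set β) (hM : M ∈ 𝒜) :
    τ (p ++ [M]) ⊆ M ∧ (τ (p ++ [M])).Finite := by
  have hA : ∀ n, padSeq p M Set.univ n ∈ 𝒜 := by
    intro n
    unfold padSeq
    split
    · exact hp _ (List.getElem_mem _)
    · split
      · exact hM
      · exact huniv
  have := hτ _ hA p.length
  rw [ghist_padSeq] at this
  have hlast : padSeq p M Set.univ p.length = M := by
    unfold padSeq; rw [dif_neg (by omega), if_pos rfl]
  rw [hlast] at this
  exact this

theorem merge_finset {α β : Type*} {R : α → β → Prop} {le : β → β → Prop}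
    (hR : IsTotalRel R) (htrans : ∀ x y z, le x y → le y z → le x z)
    (hdown : DownwardsCompat R le) (a : α) (F : Finset β)
    (hmem : ∀ b ∈ F, R a b) : ∃ b0, R a b0 ∧ ∀ b ∈ F, le b0 b := by
  classical
  induction F using Finset.induction_on with
  | empty => exact ⟨(hR a).choose, (hR a).choose_spec, by simp⟩
  | @insert x E hx ih =>
    obtain ⟨b0, hb0R, hb0⟩ := ih (fun b hb => hmem b (Finset.mem_insert_of_mem hb))
    obtain ⟨b1, hb1R, hle1, hle2⟩ := hdown a x b0 (hmem x (Finset.mem_insert_self _ _)) hb0R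
    refine ⟨b1, hb1R, ?_⟩
    intro b hb
    rcases Finset.mem_insert.mp hb with rfl | hb
    · exact hle1
    · exact htrans _ _ _ hle2 (hb0 b hb)

theorem merge {α β : Type*} {R : α → β → Prop} {le : β → β → Prop}
    (hR : IsTotalRel R) (htrans : ∀ x y z, le x y → le y z → le x z)
    (hdown : DownwardsCompat R le) (a : α) (E : Set β) (hE : E.Finite)
    (hmem : ∀ b ∈ E, R a b) : ∃ b0, R a b0 ∧ ∀ b ∈ E, le b0 b := by
  obtain ⟨b0, h1, h2⟩ := merge_finset hR htrans hdown a hE.toFinset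
    (fun b hb => hmem b (hE.mem_toFinset.mp hb))
  exact ⟨b0, h1, fun b hb => h2 b (hE.mem_toFinset.mpr hb)⟩

section Core

variable {α β α' β' : Type*} [Nonempty α]
variable (R : α → β → Prop) (hR : IsTotalRel R) (le : β → β → Prop)
variable (τ : List (Set β) → Set β) (τ' : List (Set β') → Set β')

attribute [local instance] Classical.propDecidable

/-- The move fed to TWO's strategy in the second-coordinate game. -/
def Wmv (s : Set (β × β')) (a : α) : Set β' :=
  {b' | ∃ b, R a b ∧ (b, b') ∈ s}

/-- A partner of `b'` in `s` that is `R a`-related, if one exists. -/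
noncomputable def pt (s : Set (β × β')) (a : α) (b' : β') : β :=
  if h : ∃ b, R a b ∧ (b, b') ∈ s then h.choose else (hR a).choose

/-- TWO's response in the second-coordinate game. -/
noncomputable def Ep' (s : Set (β × β')) (q : List (Set β')) (a : α) : Set β' :=
  τ' (q ++ [Wmv R s a])

/-- A common lower bound for the partners of TWO's response, still `R a`-related. -/
noncomputable def bt (s : Set (β × β')) (q : List (Set β')) (a : α) : β :=
  if h : ∃ b, R a b ∧ ∀ b' ∈ Ep' R τ' s q a, le b (pt R hR s a b') then h.choose
  else (hR a).choose

/-- The move fed to TWO's strategy in the first-coordinate game. -/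
noncomputable def Mmv (s : Set (β × β')) (q : List (Set β')) : Set β :=
  Set.range (bt R hR le τ' s q)

/-- TWO's response in the first-coordinate game. -/
noncomputable def Ep (s : Set (β × β')) (p : List (Set β)) (q : List (Set β')) : Set β :=
  τ (p ++ [Mmv R hR le τ' s q])

/-- A witness `a` with `bt s q a = b`. -/
noncomputable def wt (s : Set (β × β')) (q : List (Set β')) (b : β) : α :=
  if h : ∃ a, bt R hR le τ' s q a = b then h.choose else Classical.arbitrary α

/-- A list enumerating TWO's (finite) response in the first-coordinate game. -/
noncomputable def Elist (s : Set (β × β')) (p : List (Set β)) (q : List (Set β')) :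
    List β :=
  if h : (Ep R hR le τ τ' s p q).Finite then h.toFinset.toList else []

end Core

/-- The bookkeeping state for TWO's strategy in the product game. -/
structure GSt (β β' : Type*) where
  P : List (List (Set β))
  Q : List (List (Set β'))
  F : Set (β × β')

section Step

variable {α β α' β' : Type*} [Nonempty α]
variable (R : α → β → Prop) (hR : IsTotalRel R) (le : β → β → Prop)
variable (τ : List (Set β) → Set β) (τ' : List (Set β') → Set β')

noncomputable def gstep (σ : GSt β β') (s : Set (β × β')) : GSt β β' where
  P := σ.P ++ (σ.P.flatMap fun p => σ.Q.map fun q => p ++ [Mmv R hR le τ' s q])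
  Q := σ.Q ++ (σ.Q.flatMap fun q => σ.P.flatMap fun p =>
        (Elist R hR le τ τ' s p q).map fun b => q ++ [Wmv R s (wt R hR le τ' s q b)])
  F := {x | ∃ p ∈ σ.P, ∃ q ∈ σ.Q, ∃ b ∈ Ep R hR le τ τ' s p q,
        ∃ b' ∈ Ep' R τ' s q (wt R hR le τ' s q b),
          x = (pt R hR s (wt R hR le τ' s q b) b', b')}

noncomputable def gInit : GSt β β' := ⟨[[]], [[]], ∅⟩

end Step

section Spec

variable {α β α' β' : Type*} [Nonempty α]
variable {R : α → β → Prop} (hR : IsTotalRel R) {le : β → β → Prop}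
variable {τ : List (Set β) → Set β} {τ' : List (Set β') → Set β'}
variable {R' : α' → β' → Prop}

theorem univ_GDom {α β : Type*} {R : α → β → Prop} (h : IsTotalRel R) :
    Set.univ ∈ GDom R :=
  fun a => ⟨(h a).choose, trivial, (h a).choose_spec⟩

theorem bt_rel (s : Set (β × β')) (q : List (Set β')) (a : α) :
    R a (bt R hR le τ' s q a) := by
  unfold bt
  split
  · rename_i h
    exact h.choose_spec.1
  · exact (hR a).choose_spec

theorem Mmv_GDom (s : Set (β × β')) (q : List (Set β')) :
    Mmv R hR le τ' s q ∈ GDom R :=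
  fun a => ⟨bt R hR le τ' s q a, Set.mem_range_self a, bt_rel hR s q a⟩

theorem Wmv_GDom {s : Set (β × β')} (hs : s ∈ GDom (GProd R R')) (a : α) :
    Wmv R s a ∈ GDom R' := by
  intro a'
  obtain ⟨bb, hmem, h1, h2⟩ := hs (a, a')
  exact ⟨bb.2, ⟨bb.1, h1, by simpa using hmem⟩, h2⟩

theorem pt_spec {s : Set (β × β')} {a : α} {b' : β'} (hb' : b' ∈ Wmv R s a) :
    R a (pt R hR s a b') ∧ (pt R hR s a b', b') ∈ s := by
  have h : ∃ b, R a b ∧ (b, b') ∈ s := hb'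
  unfold pt
  rw [dif_pos h]
  exact h.choose_spec

theorem Ep'_spec (hR' : IsTotalRel R')
    (hτ' : ∀ S : ℕ → Set β', (∀ n, S n ∈ GDom R') →
      (∀ n, τ' (GHist S (n + 1)) ⊆ S n ∧ (τ' (GHist S (n + 1))).Finite))
    {s : Set (β × β')} (hs : s ∈ GDom (GProd R R'))
    {q : List (Set β')} (hq : ∀ X ∈ q, X ∈ GDom R') (a : α) :
    Ep' R τ' s q a ⊆ Wmv R s a ∧ (Ep' R τ' s q a).Finite :=
  pad τ' (univ_GDom hR') hτ' q hq _ (Wmv_GDom hs a)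

theorem bt_spec (hR' : IsTotalRel R')
    (htrans : ∀ x y z : β, le x y → le y z → le x z)
    (hdown : DownwardsCompat R le)
    (hτ' : ∀ S : ℕ → Set β', (∀ n, S n ∈ GDom R') →
      (∀ n, τ' (GHist S (n + 1)) ⊆ S n ∧ (τ' (GHist S (n + 1))).Finite))
    {s : Set (β × β')} (hs : s ∈ GDom (GProd R R'))
    {q : List (Set β')} (hq : ∀ X ∈ q, X ∈ GDom R') (a : α) :
    ∀ b' ∈ Ep' R τ' s q a, le (bt R hR le τ' s q a) (pt R hR s a b') := by
  obtain ⟨hsub, hfin⟩ := Ep'_spec hR' hτ' hs hq a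
  have hcond : ∃ b, R a b ∧ ∀ b' ∈ Ep' R τ' s q a, le b (pt R hR s a b') := by
    obtain ⟨b0, hb0R, hb0⟩ := merge hR htrans hdown a
      ((pt R hR s a) '' (Ep' R τ' s q a)) (hfin.image _)
      (by
        rintro b ⟨b', hb', rfl⟩
        exact (pt_spec hR (hsub hb')).1)
    exact ⟨b0, hb0R, fun b' hb' => hb0 _ ⟨b', hb', rfl⟩⟩
  unfold bt
  rw [dif_pos hcond]
  exact hcond.choose_spec.2

theorem wt_spec {s : Set (β × β')} {q : List (Set β')} {b : β}
    (hb : b ∈ Mmv R hR le τ' s q) :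
    bt R hR le τ' s q (wt R hR le τ' s q b) = b := by
  have h : ∃ a, bt R hR le τ' s q a = b := hb
  unfold wt
  rw [dif_pos h]
  exact h.choose_spec

theorem Ep_spec
    (hτ : ∀ S : ℕ → Set β, (∀ n, S n ∈ GDom R) →
      (∀ n, τ (GHist S (n + 1)) ⊆ S n ∧ (τ (GHist S (n + 1))).Finite))
    {p : List (Set β)} (hp : ∀ X ∈ p, X ∈ GDom R)
    (s : Set (β × β')) (q : List (Set β')) :
    Ep R hR le τ τ' s p q ⊆ Mmv R hR le τ' s q ∧ (Ep R hR le τ τ' s p q).Finite :=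
  pad τ (univ_GDom hR) hτ p hp _ (Mmv_GDom hR s q)

theorem Elist_mem {s : Set (β × β')} {p : List (Set β)} {q : List (Set β')}
    (hfin : (Ep R hR le τ τ' s p q).Finite) (b : β) :
    b ∈ Elist R hR le τ τ' s p q ↔ b ∈ Ep R hR le τ τ' s p q := by
  unfold Elist
  rw [dif_pos hfin]
  simp [Set.Finite.mem_toFinset]

theorem memP_step {σ : GSt β β'} {p : List (Set β)} (hp : p ∈ σ.P) (s : Set (β × β')) :
    p ∈ (gstep R hR le τ τ' σ s).P :=
  List.mem_append_left _ hp

theorem memQ_step {σ : GSt β β'} {q : List (Set β')} (hq : q ∈ σ.Q) (s : Set (β × β')) :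
    q ∈ (gstep R hR le τ τ' σ s).Q :=
  List.mem_append_left _ hq

theorem growthP {σ : GSt β β'} {p : List (Set β)} {q : List (Set β')}
    (hp : p ∈ σ.P) (hq : q ∈ σ.Q) (s : Set (β × β')) :
    p ++ [Mmv R hR le τ' s q] ∈ (gstep R hR le τ τ' σ s).P := by
  apply List.mem_append_right
  rw [List.mem_flatMap]
  exact ⟨p, hp, List.mem_map.mpr ⟨q, hq, rfl⟩⟩

theorem growthQ {σ : GSt β β'} {p : List (Set β)} {q : List (Set β')} {b : β}
    {s : Set (β × β')}
    (hq : q ∈ σ.Q) (hp : p ∈ σ.P) (hb : b ∈ Elist R hR le τ τ' s p q) :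
    q ++ [Wmv R s (wt R hR le τ' s q b)] ∈ (gstep R hR le τ τ' σ s).Q := by
  apply List.mem_append_right
  rw [List.mem_flatMap]
  refine ⟨q, hq, ?_⟩
  rw [List.mem_flatMap]
  exact ⟨p, hp, List.mem_map.mpr ⟨b, hb, rfl⟩⟩

end Spec


end S14
/-- With a partial order on `B` downwards `P`-compatible and upwards
`Q`-compatible, if TWO has a winning strategy in `G_fin(Dom(P'), Dom(Q'))` and in
`G_fin(Dom(P), Dom(Q))`, then TWO has a winning strategy in
`G_fin(Dom(P⊗P'), Dom(Q⊗Q'))`. -/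
theorem statement14 {α β γ α' β' γ' : Type*}
    [Nonempty α] [Nonempty γ] [Nonempty α'] [Nonempty γ']
    (R : α → β → Prop) (T : γ → β → Prop)
    (R' : α' → β' → Prop) (T' : γ' → β' → Prop)
    (hR : IsTotalRel R) (hT : IsTotalRel T)
    (hR' : IsTotalRel R') (hT' : IsTotalRel T')
    (le : β → β → Prop) (hpo : IsPartialOrder β le)
    (hdown : DownwardsCompat R le) (hup : UpwardsCompat T le)
    (hwin' : TwoWinsGfin (GDom R') (GDom T'))
    (hwin : TwoWinsGfin (GDom R) (GDom T)) :
    TwoWinsGfin (GDom (GProd R R')) (GDom (GProd T T')) := by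
  classical
  obtain ⟨τ', hτ'full⟩ := hwin'
  obtain ⟨τ, hτfull⟩ := hwin
  have hτ'resp : ∀ S : ℕ → Set β', (∀ n, S n ∈ GDom R') →
      (∀ n, τ' (GHist S (n + 1)) ⊆ S n ∧ (τ' (GHist S (n + 1))).Finite) :=
    fun S hS => (hτ'full S hS).1
  have hτresp : ∀ S : ℕ → Set β, (∀ n, S n ∈ GDom R) →
      (∀ n, τ (GHist S (n + 1)) ⊆ S n ∧ (τ (GHist S (n + 1))).Finite) :=
    fun S hS => (hτfull S hS).1
  have htrans : ∀ x y z : β, le x y → le y z → le x z :=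
    fun x y z h1 h2 => hpo.toIsPreorder.toIsTrans.trans x y z h1 h2
  refine ⟨fun l => (l.foldl (S14.gstep R hR le τ τ') S14.gInit).F, ?_⟩
  intro S hS
  let st : ℕ → S14.GSt β β' :=
    fun n => (GHist S n).foldl (S14.gstep R hR le τ τ') S14.gInit
  have hst0 : st 0 = S14.gInit := by
    show (GHist S 0).foldl _ _ = _
    rw [S14.ghist_zero]
    rfl
  have hstsucc : ∀ n, st (n + 1) = S14.gstep R hR le τ τ' (st n) (S n) := by
    intro n
    show (GHist S (n + 1)).foldl _ _ = _
    rw [S14.ghist_succ, List.foldl_append]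
    rfl
  have hmemP0 : ([] : List (Set β)) ∈ (st 0).P := by
    rw [hst0]; exact List.mem_singleton.mpr rfl
  have hmemQ0 : ([] : List (Set β')) ∈ (st 0).Q := by
    rw [hst0]; exact List.mem_singleton.mpr rfl
  -- legality of explored positions
  have hPle : ∀ n, ∀ p ∈ (st n).P, ∀ X ∈ p, X ∈ GDom R := by
    intro n
    induction n with
    | zero =>
      intro p hp X hX
      rw [hst0] at hp
      rcases List.mem_singleton.mp hp with rfl
      simp at hX
    | succ n ih =>
      intro p hp X hX
      rw [hstsucc n] at hp
      rcases List.mem_append.mp hp with hp | hp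
      · exact ih p hp X hX
      · rw [List.mem_flatMap] at hp
        obtain ⟨p0, hp0, hp⟩ := hp
        rw [List.mem_map] at hp
        obtain ⟨q0, hq0, rfl⟩ := hp
        rcases List.mem_append.mp hX with hX | hX
        · exact ih p0 hp0 X hX
        · rcases List.mem_singleton.mp hX with rfl
          exact S14.Mmv_GDom hR _ _
  have hQle : ∀ n, ∀ q ∈ (st n).Q, ∀ X ∈ q, X ∈ GDom R' := by
    intro n
    induction n with
    | zero =>
      intro q hq X hX
      rw [hst0] at hq
      rcases List.mem_singleton.mp hq with rfl
      simp at hX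
    | succ n ih =>
      intro q hq X hX
      rw [hstsucc n] at hq
      rcases List.mem_append.mp hq with hq | hq
      · exact ih q hq X hX
      · rw [List.mem_flatMap] at hq
        obtain ⟨q0, hq0, hq⟩ := hq
        rw [List.mem_flatMap] at hq
        obtain ⟨p0, hp0, hq⟩ := hq
        rw [List.mem_map] at hq
        obtain ⟨b0, hb0, rfl⟩ := hq
        rcases List.mem_append.mp hX with hX | hX
        · exact ih q0 hq0 X hX
        · rcases List.mem_singleton.mp hX with rfl
          exact S14.Wmv_GDom (hS n) _
  have hPmono : ∀ m n, m ≤ n → ∀ p ∈ (st m).P, p ∈ (st n).P := by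
    intro m n hmn
    induction n, hmn using Nat.le_induction with
    | base => exact fun p hp => hp
    | succ n hmn ih =>
      intro p hp
      rw [hstsucc n]
      exact S14.memP_step hR (ih p hp) (S n)
  have hQmono : ∀ m n, m ≤ n → ∀ q ∈ (st m).Q, q ∈ (st n).Q := by
    intro m n hmn
    induction n, hmn using Nat.le_induction with
    | base => exact fun q hq => hq
    | succ n hmn ih =>
      intro q hq
      rw [hstsucc n]
      exact S14.memQ_step hR (ih q hq) (S n)
  constructor
  · -- each response is a finite subset of the corresponding move
    intro n
    show (st (n + 1)).F ⊆ S n ∧ (st (n + 1)).F.Finite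
    rw [hstsucc n]
    constructor
    · rintro x ⟨p, hp, q, hq, b, hb, b', hb', rfl⟩
      exact (S14.pt_spec hR
        ((S14.Ep'_spec hR' hτ'resp (hS n) (hQle n q hq) _).1 hb')).2
    · apply Set.Finite.subset
        (s := ⋃ p ∈ {p | p ∈ (st n).P}, ⋃ q ∈ {q | q ∈ (st n).Q},
          ⋃ b ∈ S14.Ep R hR le τ τ' (S n) p q,
            (fun b' => (S14.pt R hR (S n) (S14.wt R hR le τ' (S n) q b) b', b')) ''
              S14.Ep' R τ' (S n) q (S14.wt R hR le τ' (S n) q b))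
      · apply Set.Finite.biUnion (List.finite_toSet _)
        intro p hp
        apply Set.Finite.biUnion (List.finite_toSet _)
        intro q hq
        apply Set.Finite.biUnion
          ((S14.Ep_spec hR hτresp (hPle n p hp) (S n) q).2)
        intro b _
        exact ((S14.Ep'_spec hR' hτ'resp (hS n) (hQle n q hq) _).2).image _
      · rintro x ⟨p, hp, q, hq, b, hb, b', hb', rfl⟩
        simp only [Set.mem_iUnion, Set.mem_image]
        exact ⟨p, hp, q, hq, b, hb, b', hb', rfl⟩
  · -- the union of the responses dominates the product relation
    intro cc
    -- capture point for the first coordinate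
    have cap1 : ∃ n p, p ∈ (st n).P ∧ ∀ m q, p ∈ (st m).P → q ∈ (st m).Q →
        ∃ b ∈ S14.Ep R hR le τ τ' (S m) p q, T cc.1 b := by
      by_contra hcon
      push_neg at hcon
      choose mf qf h1 h2 h3 using hcon
      let X := Σ' (n : ℕ) (p : List (Set β)), p ∈ (st n).P
      let g : X → X := fun t =>
        ⟨mf t.1 t.2.1 t.2.2 + 1,
         t.2.1 ++ [S14.Mmv R hR le τ' (S (mf t.1 t.2.1 t.2.2)) (qf t.1 t.2.1 t.2.2)],
         by
           rw [hstsucc]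
           exact S14.growthP hR (h1 t.1 t.2.1 t.2.2) (h2 t.1 t.2.1 t.2.2) _⟩
      let f : ℕ → X := fun i => g^[i] ⟨0, [], hmemP0⟩
      let A : ℕ → Set β := fun i =>
        S14.Mmv R hR le τ' (S (mf (f i).1 (f i).2.1 (f i).2.2))
          (qf (f i).1 (f i).2.1 (f i).2.2)
      have hfs : ∀ i, f (i + 1) = g (f i) := fun i =>
        Function.iterate_succ_apply' g i _
      have hhist : ∀ i, (f i).2.1 = GHist A i := by
        intro i
        induction i with
        | zero => rw [S14.ghist_zero]; rfl
        | succ i ih =>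
          rw [S14.ghist_succ, ← ih, hfs i]
      have hAleg : ∀ i, A i ∈ GDom R := fun i => S14.Mmv_GDom hR _ _
      obtain ⟨-, hdom⟩ := hτfull A hAleg
      obtain ⟨b, hbmem, hbT⟩ := hdom cc.1
      rw [Set.mem_iUnion] at hbmem
      obtain ⟨i, hbi⟩ := hbmem
      have hEq : τ (GHist A (i + 1)) =
          S14.Ep R hR le τ τ' (S (mf (f i).1 (f i).2.1 (f i).2.2)) (f i).2.1
            (qf (f i).1 (f i).2.1 (f i).2.2) := by
        rw [S14.ghist_succ, ← hhist i]
        rfl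
      rw [hEq] at hbi
      exact h3 (f i).1 (f i).2.1 (f i).2.2 b hbi hbT
    -- capture point for the second coordinate
    have cap2 : ∃ n q, q ∈ (st n).Q ∧ ∀ m p b, q ∈ (st m).Q → p ∈ (st m).P →
        b ∈ S14.Ep R hR le τ τ' (S m) p q →
        ∃ b' ∈ S14.Ep' R τ' (S m) q (S14.wt R hR le τ' (S m) q b), T' cc.2 b' := by
      by_contra hcon
      push_neg at hcon
      choose mf pf bf h1 h2 h3 h4 using hcon
      let X := Σ' (n : ℕ) (q : List (Set β')), q ∈ (st n).Q
      let g : X → X := fun t =>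
        ⟨mf t.1 t.2.1 t.2.2 + 1,
         t.2.1 ++ [S14.Wmv R (S (mf t.1 t.2.1 t.2.2))
            (S14.wt R hR le τ' (S (mf t.1 t.2.1 t.2.2)) t.2.1 (bf t.1 t.2.1 t.2.2))],
         by
           rw [hstsucc]
           refine S14.growthQ hR (h1 t.1 t.2.1 t.2.2) (h2 t.1 t.2.1 t.2.2) ?_
           rw [S14.Elist_mem hR
             (S14.Ep_spec hR hτresp (hPle _ _ (h2 t.1 t.2.1 t.2.2)) _ _).2]
           exact h3 t.1 t.2.1 t.2.2⟩
      let f : ℕ → X := fun i => g^[i] ⟨0, [], hmemQ0⟩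
      let A : ℕ → Set β' := fun i =>
        S14.Wmv R (S (mf (f i).1 (f i).2.1 (f i).2.2))
          (S14.wt R hR le τ' (S (mf (f i).1 (f i).2.1 (f i).2.2)) (f i).2.1
            (bf (f i).1 (f i).2.1 (f i).2.2))
      have hfs : ∀ i, f (i + 1) = g (f i) := fun i =>
        Function.iterate_succ_apply' g i _
      have hhist : ∀ i, (f i).2.1 = GHist A i := by
        intro i
        induction i with
        | zero => rw [S14.ghist_zero]; rfl
        | succ i ih =>
          rw [S14.ghist_succ, ← ih, hfs i]
      have hAleg : ∀ i, A i ∈ GDom R' := fun i =>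
        S14.Wmv_GDom (hS (mf (f i).1 (f i).2.1 (f i).2.2)) _
      obtain ⟨-, hdom⟩ := hτ'full A hAleg
      obtain ⟨b', hbmem, hbT⟩ := hdom cc.2
      rw [Set.mem_iUnion] at hbmem
      obtain ⟨i, hbi⟩ := hbmem
      have hEq : τ' (GHist A (i + 1)) =
          S14.Ep' R τ' (S (mf (f i).1 (f i).2.1 (f i).2.2)) (f i).2.1
            (S14.wt R hR le τ' (S (mf (f i).1 (f i).2.1 (f i).2.2)) (f i).2.1
              (bf (f i).1 (f i).2.1 (f i).2.2)) := by
        rw [S14.ghist_succ, ← hhist i]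
        rfl
      rw [hEq] at hbi
      exact h4 (f i).1 (f i).2.1 (f i).2.2 b' hbi hbT
    obtain ⟨n1, pstar, hp1, hcap1⟩ := cap1
    obtain ⟨n2, qstar, hq2, hcap2⟩ := cap2
    have hpn : pstar ∈ (st (max n1 n2)).P := hPmono n1 _ (le_max_left _ _) _ hp1
    have hqn : qstar ∈ (st (max n1 n2)).Q := hQmono n2 _ (le_max_right _ _) _ hq2
    set n := max n1 n2 with hn
    obtain ⟨b, hbEp, hbT⟩ := hcap1 n qstar hpn hqn
    obtain ⟨b', hb'Ep', hb'T⟩ := hcap2 n pstar b hqn hpn hbEp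
    have hbtb : S14.bt R hR le τ' (S n) qstar (S14.wt R hR le τ' (S n) qstar b) = b :=
      S14.wt_spec hR ((S14.Ep_spec hR hτresp (hPle n _ hpn) (S n) qstar).1 hbEp)
    have hle : le b (S14.pt R hR (S n) (S14.wt R hR le τ' (S n) qstar b) b') := by
      have := S14.bt_spec hR hR' htrans hdown hτ'resp (hS n) (hQle n _ hqn)
        (S14.wt R hR le τ' (S n) qstar b) b' hb'Ep'
      rwa [hbtb] at this
    have hpt := S14.pt_spec hR
      ((S14.Ep'_spec hR' hτ'resp (hS n) (hQle n _ hqn)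
        (S14.wt R hR le τ' (S n) qstar b)).1 hb'Ep')
    refine ⟨(S14.pt R hR (S n) (S14.wt R hR le τ' (S n) qstar b) b', b'), ?_, ?_, ?_⟩
    · rw [Set.mem_iUnion]
      refine ⟨n, ?_⟩
      show _ ∈ (st (n + 1)).F
      rw [hstsucc n]
      exact ⟨pstar, hpn, qstar, hqn, b, hbEp, b', hb'Ep', rfl⟩
    · exact hup cc.1 b _ hbT hle
    · exact hb'T
end

section
/- Let P = (A,B,R) and Q = (C,B,T) be relations. Suppose there is a downwards P-compatible partial order ⊴ on A such that for each finite subset F of A there is ã(F) ∈ A with a ⊴ ã(F) for all a ∈ F. Then ONE has a winning strategy in G(P,Q) if and only if ONE has a winning strategy in G_γ(P,Q). -/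
open Set

/-!
A play of `G_γ(P,Q)` that is not `γ`-dominating has an infinite set of innings at which some
`c` is not dominated. ONE's strategy in `G_γ(P,Q)` answers a history with an upper bound of
all the moves ONE's winning strategy for `G(P,Q)` makes on sub-histories; by downwards
compatibility the moves of TWO on those innings then form a legal play against the winning
strategy, whose range must dominate `c` — a contradiction.
-/

theorem gHist_eq_map_range {β : Type*} (b : ℕ → β) (n : ℕ) :
    GHist b n = (List.range n).map b :=
  List.ext_getElem (by simp [GHist]) (by simp [GHist])

theorem List.map_range_sublist_range {f : ℕ → ℕ} (hf : StrictMono f) (k : ℕ) :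
    ((List.range k).map f).Sublist (List.range (f k)) := by
  induction k with
  | zero => simp
  | succ k ih =>
    rw [List.range_succ, List.map_append, List.map_singleton]
    have hstep : (List.range (f k) ++ [f k]).Sublist (List.range (f (k + 1))) := by
      rw [← List.range_succ]
      exact List.range_sublist.2 (hf k.lt_succ_self)
    exact (ih.append_right _).trans hstep

theorem gHist_comp_sublist {β : Type*} (b : ℕ → β) {f : ℕ → ℕ} (hf : StrictMono f) (k : ℕ) :
    (GHist (b ∘ f) k).Sublist (GHist b (f k)) := by
  simpa [gHist_eq_map_range, List.map_map] using (List.map_range_sublist_range hf k).map b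

theorem range_mem_gDom_of_mem_gDomGamma {β γ : Type*} {T : γ → β → Prop} {b : ℕ → β}
    (hb : b ∈ GDomGamma T) : Set.range b ∈ GDom T := fun c => by
  obtain ⟨n, hn⟩ := (hb c).infinite_compl.nonempty
  exact ⟨b n, Set.mem_range_self n, not_not.mp hn⟩

theorem mem_gDomGamma_of_forall_strictMono {β γ : Type*} {T : γ → β → Prop} {b : ℕ → β}
    (hb : ∀ f : ℕ → ℕ, StrictMono f → Set.range (b ∘ f) ∈ GDom T) : b ∈ GDomGamma T := by
  intro c
  by_contra hinf
  let f := Nat.nth fun n => ¬ T c (b n)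
  obtain ⟨_, ⟨k, rfl⟩, hk⟩ := hb f (Nat.nth_strictMono hinf) c
  exact Nat.nth_mem_of_infinite hinf k hk

theorem OneWinsGgamma.oneWinsG {α β γ : Type*} {R : α → β → Prop} {T : γ → β → Prop}
    (h : OneWinsGgamma R T) : OneWinsG R T :=
  let ⟨σ, hσ⟩ := h
  ⟨σ, fun b hb => range_mem_gDom_of_mem_gDomGamma (hσ b hb)⟩

theorem exists_strategy_bounding_sublists {α β : Type*} {le : α → α → Prop}
    (hub : ∀ F : Finset α, ∃ a, ∀ a' ∈ F, le a' a) (σ : List β → α) :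
    ∃ σ' : List β → α, ∀ h s, List.Sublist s h → le (σ s) (σ' h) := by
  classical
  choose ub hub using hub
  exact ⟨fun h => ub (h.sublists.map σ).toFinset, fun h s hs =>
    hub _ _ (List.mem_toFinset.2 (List.mem_map_of_mem (List.mem_sublists.2 hs)))⟩

theorem oneWinsGgamma_of_oneWinsG {α β γ : Type*} {R : α → β → Prop} {T : γ → β → Prop}
    {le : α → α → Prop} (hdown : ∀ a₁ a₂ b, le a₁ a₂ → R a₂ b → R a₁ b)
    (hub : ∀ F : Finset α, ∃ a, ∀ a' ∈ F, le a' a) (h : OneWinsG R T) : OneWinsGgamma R T := by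
  obtain ⟨σ, hσ⟩ := h
  obtain ⟨σ', hσ'⟩ := exists_strategy_bounding_sublists hub σ
  refine ⟨σ', fun b hb => mem_gDomGamma_of_forall_strictMono fun f hf => hσ (b ∘ f) fun k => ?_⟩
  exact hdown _ _ _ (hσ' _ _ (gHist_comp_sublist b hf k)) (hb (f k))

theorem statement17_general {α β γ : Type*}
    (R : α → β → Prop) (T : γ → β → Prop)
    (le : α → α → Prop)
    (hdown : ∀ a₁ a₂ b, le a₁ a₂ → R a₂ b → R a₁ b)
    (hub : ∀ F : Finset α, ∃ a, ∀ a' ∈ F, le a' a) :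
    OneWinsG R T ↔ OneWinsGgamma R T :=
  ⟨oneWinsGgamma_of_oneWinsG hdown hub, OneWinsGgamma.oneWinsG⟩

/-- If there is a downwards `P`-compatible partial order on `A` in which
every finite subset of `A` has an upper bound, then ONE has a winning strategy in
`G(P,Q)` iff ONE has a winning strategy in `G_γ(P,Q)`. -/
theorem statement17 {α β γ : Type*} [Nonempty α] [Nonempty γ]
    (R : α → β → Prop) (T : γ → β → Prop)
    (hR : IsTotalRel R) (hT : IsTotalRel T)
    (le : α → α → Prop) (hpo : IsPartialOrder α le)
    (hdown : ∀ a₁ a₂ b, le a₁ a₂ → R a₂ b → R a₁ b)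
    (hub : ∀ F : Finset α, ∃ a, ∀ a' ∈ F, le a' a) :
    OneWinsG R T ↔ OneWinsGgamma R T :=
  statement17_general R T le hdown hub
end
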